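/- Let U be a unitary operator on h⊗H, Ω a unit vector in H, {e_m}_{m≥1} an orthonormal basis of h, and T the bounded operator on h with ⟨φ, Tψ⟩ = ⟨φ⊗Ω, U(ψ⊗Ω)⟩. Then for every v ∈ h the series Σ_m ‖(U − 1)(e_m,v)Ω‖² converges and Σ_m ‖(U − 1)(e_m,v)Ω‖² = 2 Re⟨v, (1 − T)v⟩ ≤ 2‖v‖²·‖1 − T‖. -/

import Mathlib

/-!
The space `E` plays the role of `h ⊗ H`: it is only known through `tmul`, which preserves inner
products and has dense span. For Hilbert bases `e` of `h` and `f` of `H` the vectors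
`e m ⊗ f i` are then a Hilbert basis of `E`, and `⟪f i, A(e m, v) ξ⟫ = ⟪e m ⊗ f i, A(v ⊗ ξ)⟫`.
Parseval in `H` for each `m`, summed over `m`, is therefore Parseval in `E` for `A(v ⊗ ξ)`:
`∑ₘ ‖A(e m, v) ξ‖² = ‖A(v ⊗ ξ)‖²`. For `A = U - 1` with `U` unitary and `ξ = Ω` a unit vector,
`‖(U - 1)(v ⊗ Ω)‖² = 2 Re⟪v ⊗ Ω, (1 - U)(v ⊗ Ω)⟫ = 2 Re⟪v, (1 - T) v⟫`.
-/

open scoped InnerProductSpace ComplexInnerProductSpace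
open ContinuousLinearMap

namespace HilbertBasis

variable {ι 𝕜 E : Type*} [RCLike 𝕜] [NormedAddCommGroup E] [InnerProductSpace 𝕜 E]

theorem eq_top_of_forall_mem {S : Submodule 𝕜 E} (hS : IsClosed (S : Set E))
    (b : HilbertBasis ι 𝕜 E) (hb : ∀ i, b i ∈ S) : S = ⊤ := by
  refine top_unique (b.dense_span ▸ Submodule.topologicalClosure_minimal _ ?_ hS)
  exact Submodule.span_le.2 (Set.range_subset_iff.2 hb)

theorem hasSum_norm_inner_sq (b : HilbertBasis ι 𝕜 E) (x : E) :
    HasSum (fun i => ‖⟪b i, x⟫_𝕜‖ ^ 2) (‖x‖ ^ 2) := by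
  have h := lp.hasSum_norm (p := 2) (by norm_num) (b.repr x)
  simpa [b.repr_apply_apply, Real.rpow_two, b.repr.norm_map] using h

end HilbertBasis

theorem re_inner_map_self_le_norm_sq_mul {𝕜 E : Type*} [RCLike 𝕜] [NormedAddCommGroup E]
    [InnerProductSpace 𝕜 E] (A : E →L[𝕜] E) (x : E) :
    RCLike.re ⟪x, A x⟫_𝕜 ≤ ‖x‖ ^ 2 * ‖A‖ :=
  calc RCLike.re ⟪x, A x⟫_𝕜 ≤ ‖x‖ * ‖A x‖ := re_inner_le_norm _ _
    _ ≤ ‖x‖ * (‖A‖ * ‖x‖) := by gcongr; exact A.le_opNorm x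
    _ = ‖x‖ ^ 2 * ‖A‖ := by ring

theorem norm_sub_one_apply_sq {𝕜 E : Type*} [RCLike 𝕜] [NormedAddCommGroup E]
    [InnerProductSpace 𝕜 E] {U : E →L[𝕜] E} (hU : ∀ y, ‖U y‖ = ‖y‖) (y : E) :
    ‖(U - 1) y‖ ^ 2 = 2 * RCLike.re ⟪y, (1 - U) y⟫_𝕜 := by
  simp only [sub_apply, one_apply_eq_self, norm_sub_sq (𝕜 := 𝕜), hU,
    inner_sub_right, map_sub, inner_re_symm (𝕜 := 𝕜) (U y), ← norm_sq_eq_re_inner]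
  ring

section TensorModel

variable {h H E : Type*}
  [NormedAddCommGroup h] [InnerProductSpace ℂ h]
  [NormedAddCommGroup H] [InnerProductSpace ℂ H]
  [NormedAddCommGroup E] [InnerProductSpace ℂ E]
  {tmul : h →ₗ[ℂ] H →ₗ[ℂ] E}

theorem norm_tmul (htmul : ∀ (u v : h) (ξ ζ : H), ⟪tmul u ξ, tmul v ζ⟫ = ⟪u, v⟫ * ⟪ξ, ζ⟫)
    (u : h) (ξ : H) : ‖tmul u ξ‖ = ‖u‖ * ‖ξ‖ := by
  have hsq : ‖tmul u ξ‖ ^ 2 = (‖u‖ * ‖ξ‖) ^ 2 := by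
    rw [norm_sq_eq_re_inner (𝕜 := ℂ), htmul, inner_self_eq_norm_sq_to_K,
      inner_self_eq_norm_sq_to_K]
    norm_cast
    ring
  exact (sq_eq_sq₀ (norm_nonneg _) (by positivity)).1 hsq

theorem continuous_tmul (htmul : ∀ (u v : h) (ξ ζ : H), ⟪tmul u ξ, tmul v ζ⟫ = ⟪u, v⟫ * ⟪ξ, ζ⟫)
    (u : h) : Continuous (tmul u) :=
  AddMonoidHomClass.continuous_of_bound (tmul u) ‖u‖ fun ξ => (norm_tmul htmul u ξ).le

theorem continuous_tmul_flip
    (htmul : ∀ (u v : h) (ξ ζ : H), ⟪tmul u ξ, tmul v ζ⟫ = ⟪u, v⟫ * ⟪ξ, ζ⟫)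
    (ξ : H) : Continuous (tmul.flip ξ) :=
  AddMonoidHomClass.continuous_of_bound (tmul.flip ξ) ‖ξ‖ fun u => by
    rw [LinearMap.flip_apply, norm_tmul htmul, mul_comm]

theorem tmul_mem_of_forall_basis_mem
    (htmul : ∀ (u v : h) (ξ ζ : H), ⟪tmul u ξ, tmul v ζ⟫ = ⟪u, v⟫ * ⟪ξ, ζ⟫)
    {ι κ : Type*} (e : HilbertBasis ι ℂ h) (f : HilbertBasis κ ℂ H)
    {K : Submodule ℂ E} (hK : IsClosed (K : Set E)) (hbasis : ∀ m i, tmul (e m) (f i) ∈ K)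
    (u : h) (ξ : H) : tmul u ξ ∈ K := by
  have hleft (m : ι) : K.comap (tmul (e m)) = ⊤ :=
    f.eq_top_of_forall_mem (hK.preimage (continuous_tmul htmul _)) (hbasis m)
  have hright : K.comap (tmul.flip ξ) = ⊤ :=
    e.eq_top_of_forall_mem (hK.preimage (continuous_tmul_flip htmul ξ))
      fun m => Submodule.eq_top_iff'.1 (hleft m) ξ
  exact Submodule.eq_top_iff'.1 hright u

theorem inner_tmul_one_sub_apply_tmul
    (htmul : ∀ (u v : h) (ξ ζ : H), ⟪tmul u ξ, tmul v ζ⟫ = ⟪u, v⟫ * ⟪ξ, ζ⟫)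
    {U : E →L[ℂ] E} {Ω : H} (hΩ : ‖Ω‖ = 1) {T : h →L[ℂ] h}
    (hT : ∀ φ ψ : h, ⟪φ, T ψ⟫ = ⟪tmul φ Ω, U (tmul ψ Ω)⟫) (φ ψ : h) :
    ⟪tmul φ Ω, (1 - U) (tmul ψ Ω)⟫ = ⟪φ, (1 - T) ψ⟫ := by
  simp [htmul, hT, inner_self_eq_norm_sq_to_K, hΩ]

variable [CompleteSpace E] {ι κ : Type*}

noncomputable def tmulHilbertBasis
    (htmul : ∀ (u v : h) (ξ ζ : H), ⟪tmul u ξ, tmul v ζ⟫ = ⟪u, v⟫ * ⟪ξ, ζ⟫)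
    (hdense : (Submodule.span ℂ (Set.range fun p : h × H => tmul p.1 p.2)).topologicalClosure = ⊤)
    (e : HilbertBasis ι ℂ h) (f : HilbertBasis κ ℂ H) : HilbertBasis (ι × κ) ℂ E :=
  HilbertBasis.mk (v := fun p => tmul (e p.1) (f p.2))
    (by
      classical
      rw [orthonormal_iff_ite]
      rintro ⟨m, i⟩ ⟨n, j⟩
      simp only [htmul, orthonormal_iff_ite.1 e.orthonormal, orthonormal_iff_ite.1 f.orthonormal,
        Prod.mk.injEq, ite_zero_mul_ite_zero, mul_one])
    (by
      rw [← hdense]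
      refine Submodule.topologicalClosure_minimal _ ?_ (Submodule.isClosed_topologicalClosure _)
      rw [Submodule.span_le]
      rintro _ ⟨⟨u, ξ⟩, rfl⟩
      refine tmul_mem_of_forall_basis_mem htmul e f (Submodule.isClosed_topologicalClosure _)
        (fun m i => ?_) u ξ
      exact Submodule.le_topologicalClosure _ (Submodule.subset_span (Set.mem_range_self (m, i))))

theorem coe_tmulHilbertBasis
    (htmul : ∀ (u v : h) (ξ ζ : H), ⟪tmul u ξ, tmul v ζ⟫ = ⟪u, v⟫ * ⟪ξ, ζ⟫)
    (hdense : (Submodule.span ℂ (Set.range fun p : h × H => tmul p.1 p.2)).topologicalClosure = ⊤)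
    (e : HilbertBasis ι ℂ h) (f : HilbertBasis κ ℂ H) :
    ⇑(tmulHilbertBasis htmul hdense e f) = fun p => tmul (e p.1) (f p.2) :=
  HilbertBasis.coe_mk _ _

theorem hasSum_norm_opAt_apply_sq [CompleteSpace H]
    (htmul : ∀ (u v : h) (ξ ζ : H), ⟪tmul u ξ, tmul v ζ⟫ = ⟪u, v⟫ * ⟪ξ, ζ⟫)
    (hdense : (Submodule.span ℂ (Set.range fun p : h × H => tmul p.1 p.2)).topologicalClosure = ⊤)
    {opAt : (E →L[ℂ] E) → h → h → (H →L[ℂ] H)}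
    (hopAt : ∀ (A : E →L[ℂ] E) (u v : h) (ξ₁ ξ₂ : H),
      ⟪ξ₁, opAt A u v ξ₂⟫ = ⟪tmul u ξ₁, A (tmul v ξ₂)⟫)
    (A : E →L[ℂ] E) (e : HilbertBasis ι ℂ h) (v : h) (ξ : H) :
    HasSum (fun m => ‖opAt A (e m) v ξ‖ ^ 2) (‖A (tmul v ξ)‖ ^ 2) := by
  obtain ⟨w, f, -⟩ := exists_hilbertBasis ℂ H
  refine ((tmulHilbertBasis htmul hdense e f).hasSum_norm_inner_sq _).prod_fiberwise fun m => ?_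
  simpa only [coe_tmulHilbertBasis, ← hopAt] using f.hasSum_norm_inner_sq (opAt A (e m) v ξ)

end TensorModel

theorem stmt10_general
    {h H E : Type*}
    [NormedAddCommGroup h] [InnerProductSpace ℂ h]
    [NormedAddCommGroup H] [InnerProductSpace ℂ H] [CompleteSpace H]
    [NormedAddCommGroup E] [InnerProductSpace ℂ E] [CompleteSpace E]
    (tmul : h →ₗ[ℂ] H →ₗ[ℂ] E)
    (htmul : ∀ (u v : h) (ξ ζ : H), ⟪tmul u ξ, tmul v ζ⟫ = ⟪u, v⟫ * ⟪ξ, ζ⟫)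
    (hdense : (Submodule.span ℂ (Set.range fun p : h × H => tmul p.1 p.2)).topologicalClosure = ⊤)
    (opAt : (E →L[ℂ] E) → h → h → (H →L[ℂ] H))
    (hopAt : ∀ (A : E →L[ℂ] E) (u v : h) (ξ₁ ξ₂ : H),
      ⟪ξ₁, opAt A u v ξ₂⟫ = ⟪tmul u ξ₁, A (tmul v ξ₂)⟫)
    (U : E →L[ℂ] E)
    (hU : adjoint U * U = 1 ∧ U * adjoint U = 1)
    (Ω : H) (hΩ : ‖Ω‖ = 1)
    (e : HilbertBasis ℕ ℂ h)
    (T : h →L[ℂ] h)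
    (hT : ∀ φ ψ : h, ⟪φ, T ψ⟫ = ⟪tmul φ Ω, U (tmul ψ Ω)⟫)
    (v : h) :
    HasSum (fun m : ℕ => ‖(opAt (U - 1) (e m) v) Ω‖ ^ 2)
        (2 * (⟪v, ((1 : h →L[ℂ] h) - T) v⟫).re) ∧
    2 * (⟪v, ((1 : h →L[ℂ] h) - T) v⟫).re ≤ 2 * ‖v‖ ^ 2 * ‖(1 : h →L[ℂ] h) - T‖ := by
  have hsum := hasSum_norm_opAt_apply_sq htmul hdense hopAt (U - 1) e v Ω
  rw [norm_sub_one_apply_sq (U.norm_map_of_mem_unitary (Unitary.mem_iff.2 hU)),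
    inner_tmul_one_sub_apply_tmul htmul hΩ hT] at hsum
  have hle := re_inner_map_self_le_norm_sq_mul (1 - T) v
  rw [RCLike.re_to_complex] at hsum hle
  exact ⟨hsum, by linarith⟩

theorem stmt10
    {h H E : Type*}
    [NormedAddCommGroup h] [InnerProductSpace ℂ h] [CompleteSpace h]
    [TopologicalSpace.SeparableSpace h]
    [NormedAddCommGroup H] [InnerProductSpace ℂ H] [CompleteSpace H]
    [TopologicalSpace.SeparableSpace H]
    [NormedAddCommGroup E] [InnerProductSpace ℂ E] [CompleteSpace E]
    (tmul : h →ₗ[ℂ] H →ₗ[ℂ] E)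
    (htmul : ∀ (u v : h) (ξ ζ : H), ⟪tmul u ξ, tmul v ζ⟫ = ⟪u, v⟫ * ⟪ξ, ζ⟫)
    (hdense : (Submodule.span ℂ (Set.range fun p : h × H => tmul p.1 p.2)).topologicalClosure = ⊤)
    (opAt : (E →L[ℂ] E) → h → h → (H →L[ℂ] H))
    (hopAt : ∀ (A : E →L[ℂ] E) (u v : h) (ξ₁ ξ₂ : H),
      ⟪ξ₁, opAt A u v ξ₂⟫ = ⟪tmul u ξ₁, A (tmul v ξ₂)⟫)
    (U : E →L[ℂ] E)
    (hU : adjoint U * U = 1 ∧ U * adjoint U = 1)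
    (Ω : H) (hΩ : ‖Ω‖ = 1)
    (e : HilbertBasis ℕ ℂ h)
    (T : h →L[ℂ] h)
    (hT : ∀ φ ψ : h, ⟪φ, T ψ⟫ = ⟪tmul φ Ω, U (tmul ψ Ω)⟫)
    (v : h) :
    HasSum (fun m : ℕ => ‖(opAt (U - 1) (e m) v) Ω‖ ^ 2)
        (2 * (⟪v, ((1 : h →L[ℂ] h) - T) v⟫).re) ∧
    2 * (⟪v, ((1 : h →L[ℂ] h) - T) v⟫).re ≤ 2 * ‖v‖ ^ 2 * ‖(1 : h →L[ℂ] h) - T‖ :=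
  stmt10_general tmul htmul hdense opAt hopAt U hU Ω hΩ e T hT v
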